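/- arXiv:2001.07298 — 2 statements merged into one kernel-verified Lean document; each statement's English description precedes it below -/
import Mathlib

section
/- For integer n ≥ 2 and p = 1, the statistic ν_{n,1}^{(u)}(S) = 1 + 2·Σ_{i=1}^n (i − S(i))(n − (i−1)) / Σ_{i=1}^n (n+1−2i)(n − (i−1)) equals the Spearman rank correlation ρ_{n,s}(S) = (12/(n³−n))·Σ_{i=1}^n i·S(i) − 3(n+1)/(n−1). -/
open Finset

/-- The weighted rank statistic ν_{n,p}^{(u)}. -/
noncomputable def nuU (n p : ℕ) (σ : Equiv.Perm ℕ) : ℝ :=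
  1 + 2 * (∑ i ∈ Finset.Icc 1 n, ((i : ℝ) - (σ i : ℝ)) * ((n : ℝ) ^ p - ((i : ℝ) - 1) ^ p)) /
      (∑ i ∈ Finset.Icc 1 n, ((n : ℝ) + 1 - 2 * i) * ((n : ℝ) ^ p - ((i : ℝ) - 1) ^ p))

/-- Spearman's rank correlation. -/
noncomputable def spearman (n : ℕ) (σ : Equiv.Perm ℕ) : ℝ :=
  (12 / ((n : ℝ) ^ 3 - n)) * (∑ i ∈ Finset.Icc 1 n, (i : ℝ) * (σ i : ℝ))
    - 3 * ((n : ℝ) + 1) / ((n : ℝ) - 1)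

/-! For `p = 1` the weight `n - (i - 1)` is affine in `i`, so both sums in `nuU` reduce to the power
sums `∑ i` and `∑ i ^ 2` together with `∑ i * σ i`: since `σ` permutes `{1, …, n}`, the terms linear
in `σ i` cancel, the numerator is `∑ i * σ i - ∑ i ^ 2`, and the denominator is `(n ^ 3 - n) / 6`. -/

lemma sum_Icc_one_cast (n : ℕ) : ∑ i ∈ Icc 1 n, (i : ℝ) = n * (n + 1) / 2 := by
  induction n with
  | zero => simp
  | succ k ih =>
    rw [sum_Icc_succ_top (Nat.le_add_left 1 k), ih]
    push_cast
    ring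

lemma sum_Icc_one_cast_sq (n : ℕ) :
    ∑ i ∈ Icc 1 n, (i : ℝ) ^ 2 = n * (n + 1) * (2 * n + 1) / 6 := by
  induction n with
  | zero => simp
  | succ k ih =>
    rw [sum_Icc_succ_top (Nat.le_add_left 1 k), ih]
    push_cast
    ring

lemma sum_Icc_sub_perm_mul (n : ℕ) (σ : Equiv.Perm ℕ)
    (hσ : ∑ i ∈ Icc 1 n, (σ i : ℝ) = ∑ i ∈ Icc 1 n, (i : ℝ)) :
    ∑ i ∈ Icc 1 n, ((i : ℝ) - σ i) * (n - (i - 1)) =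
      ∑ i ∈ Icc 1 n, (i : ℝ) * σ i - ∑ i ∈ Icc 1 n, (i : ℝ) ^ 2 := by
  have hterm : ∀ i ∈ Icc 1 n, ((i : ℝ) - σ i) * (n - (i - 1)) =
      (n + 1) * ((i : ℝ) - σ i) + ((i : ℝ) * σ i - (i : ℝ) ^ 2) := fun _ _ => by ring
  rw [sum_congr rfl hterm, sum_add_distrib, ← mul_sum, sum_sub_distrib, sum_sub_distrib, hσ]
  ring

lemma sum_Icc_rank_weight (n : ℕ) :
    ∑ i ∈ Icc 1 n, ((n : ℝ) + 1 - 2 * i) * (n - (i - 1)) = ((n : ℝ) ^ 3 - n) / 6 := by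
  have hterm : ∀ i ∈ Icc 1 n, ((n : ℝ) + 1 - 2 * i) * (n - (i - 1)) =
      ((n : ℝ) + 1) ^ 2 - 3 * (n + 1) * i + 2 * (i : ℝ) ^ 2 := fun _ _ => by ring
  rw [sum_congr rfl hterm, sum_add_distrib, sum_sub_distrib, sum_const, ← mul_sum, ← mul_sum,
    sum_Icc_one_cast, sum_Icc_one_cast_sq, Nat.card_Icc, Nat.add_sub_cancel, nsmul_eq_mul]
  ring

theorem stmt_7_general (n : ℕ) (hn : 2 ≤ n) (σ : Equiv.Perm ℕ)
    (hfix : ∀ i, i ∉ Finset.Icc 1 n → σ i = i) :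
    nuU n 1 σ = spearman n σ := by
  have hσ : ∑ i ∈ Icc 1 n, (σ i : ℝ) = ∑ i ∈ Icc 1 n, (i : ℝ) :=
    σ.sum_comp _ (fun i : ℕ => (i : ℝ)) fun i hi => by_contra fun h => hi (hfix i h)
  have hn' : (2 : ℝ) ≤ n := by exact_mod_cast hn
  have hcube : (n : ℝ) ^ 3 - n = n * (n - 1) * (n + 1) := by ring
  simp only [nuU, spearman, pow_one]
  rw [sum_Icc_sub_perm_mul n σ hσ, sum_Icc_rank_weight, sum_Icc_one_cast_sq, hcube]
  field_simp [show (n : ℝ) - 1 ≠ 0 by linarith]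
  ring

theorem stmt_7 (n : ℕ) (hn : 2 ≤ n) (σ : Equiv.Perm ℕ)
    (hmem : ∀ i ∈ Finset.Icc 1 n, σ i ∈ Finset.Icc 1 n)
    (hfix : ∀ i, i ∉ Finset.Icc 1 n → σ i = i) :
    nuU n 1 σ = spearman n σ :=
  stmt_7_general n hn σ hfix
end

section
/- For the Cuadras–Augé copula C_θ(u,v) = min(u,v)^θ (uv)^{1−θ} with θ ∈ [0,1] and integer p ≥ 1 (with θ < 2 so the denominator is nonzero), the coefficient ν_p^{(l)} = 2(p+1)(p+2)∫_0^1∫_0^1 (1−u)^{p−1}(C_θ(u,v) − uv) du dv equals θ(p+2)(1 − p(p+1)B(p, 4−θ)) / (p(2−θ)), where B is the Beta function. -/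
/-- The Cuadras–Augé copula C_θ(u,v) = min(u,v)^θ (uv)^(1-θ). -/
noncomputable def cuadrasAuge (θ u v : ℝ) : ℝ :=
  (min u v) ^ θ * (u * v) ^ (1 - θ)

/-- The Beta function B(a,b) = ∫_0^1 x^(a-1) (1-x)^(b-1) dx. -/
noncomputable def betaFn (a b : ℝ) : ℝ :=
  ∫ x in (0:ℝ)..1, x ^ (a - 1) * (1 - x) ^ (b - 1)

/-!
For fixed `u`, the copula is linear in `v` below the diagonal, `C_θ(u,v) = u^(1-θ) v` for
`v ≤ u`, and equals `u v^(1-θ)` above it, so the inner integral is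
`θ / (2(2-θ)) · (u - u^(3-θ))`. Against the weight `(1-u)^(p-1)` the two terms integrate to
`1 / (p(p+1))` and, after `u ↦ 1 - u`, to `B(p, 4-θ)`.
-/

open intervalIntegral Set

lemma Real.rpow_mul_rpow_one_sub {x : ℝ} (hx : 0 ≤ x) (θ : ℝ) : x ^ θ * x ^ (1 - θ) = x := by
  rw [← Real.rpow_add' hx (by norm_num), add_sub_cancel, Real.rpow_one]

lemma cuadrasAuge_comm (θ u v : ℝ) : cuadrasAuge θ u v = cuadrasAuge θ v u := by
  rw [cuadrasAuge, cuadrasAuge, min_comm, mul_comm u]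

lemma cuadrasAuge_of_le {θ u v : ℝ} (hv : 0 ≤ v) (hvu : v ≤ u) :
    cuadrasAuge θ u v = u ^ (1 - θ) * v := by
  rw [cuadrasAuge, min_eq_right hvu, Real.mul_rpow (hv.trans hvu) hv, mul_left_comm,
    Real.rpow_mul_rpow_one_sub hv]

lemma integral_cuadrasAuge_sub_mul {θ u : ℝ} (hθ : θ < 2) (hu : u ∈ Icc (0:ℝ) 1) :
    ∫ v in (0:ℝ)..1, (cuadrasAuge θ u v - u * v) = θ / (2 * (2 - θ)) * (u - u ^ (3 - θ)) := by
  obtain ⟨hu0, hu1⟩ := hu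
  have h_low : EqOn (fun v => cuadrasAuge θ u v - u * v) (fun v => (u ^ (1 - θ) - u) * v)
      (uIcc 0 u) := fun v hv => by
    rw [uIcc_of_le hu0] at hv
    simp only [cuadrasAuge_of_le hv.1 hv.2]; ring
  have h_high : EqOn (fun v => cuadrasAuge θ u v - u * v) (fun v => u * (v ^ (1 - θ) - v))
      (uIcc u 1) := fun v hv => by
    rw [uIcc_of_le hu1] at hv
    simp only [cuadrasAuge_comm θ u, cuadrasAuge_of_le hu0 hv.1]; ring
  have h_rpow : IntervalIntegrable (fun v : ℝ => v ^ (1 - θ)) MeasureTheory.volume u 1 :=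
    intervalIntegrable_rpow' (by linarith)
  have h_id : IntervalIntegrable (fun v : ℝ => v) MeasureTheory.volume u 1 := intervalIntegrable_id
  rw [← integral_add_adjacent_intervals (b := u)
      ((intervalIntegrable_congr (h_low.mono uIoc_subset_uIcc)).2
        (intervalIntegrable_id.const_mul _))
      ((intervalIntegrable_congr (h_high.mono uIoc_subset_uIcc)).2
        ((h_rpow.sub h_id).const_mul u)),
    integral_congr h_low, integral_congr h_high,
    integral_const_mul, integral_const_mul, integral_sub h_rpow h_id,
    integral_rpow (Or.inl (by linarith)), integral_id, integral_id,
    show (1:ℝ) - θ + 1 = 2 - θ by ring, Real.one_rpow]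
  have h_pow2 : u ^ (2 - θ) = u ^ (1 - θ) * u := by
    rw [← Real.rpow_add_one' hu0 (by linarith)]; ring_nf
  have h_pow3 : u ^ (3 - θ) = u ^ (1 - θ) * u * u := by
    rw [← h_pow2, ← Real.rpow_add_one' hu0 (by linarith)]; ring_nf
  have h2θ : (2:ℝ) - θ ≠ 0 := by linarith
  rw [h_pow2, h_pow3]
  field_simp
  ring

lemma betaFn_natCast_add_one (n : ℕ) (b : ℝ) :
    betaFn (n + 1) b = ∫ u in (0:ℝ)..1, (1 - u) ^ n * u ^ (b - 1) := by
  simpa [betaFn, Real.rpow_natCast] using integral_comp_sub_left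
    (fun x : ℝ => x ^ n * (1 - x) ^ (b - 1)) (a := 0) (b := 1) 1 |>.symm

lemma integral_one_sub_pow_mul_self (n : ℕ) :
    ∫ u in (0:ℝ)..1, (1 - u) ^ n * u = 1 / ((n + 1) * (n + 2)) := by
  have h_subst := integral_comp_sub_left (fun x : ℝ => x ^ n - x ^ (n + 1)) (a := 0) (b := 1) 1
  simp only [sub_zero, sub_self] at h_subst
  rw [integral_sub (intervalIntegrable_pow _) (intervalIntegrable_pow _), integral_pow,
    integral_pow] at h_subst
  rw [integral_congr (g := fun u => (1 - u) ^ n - (1 - u) ^ (n + 1)) fun u _ => by ring, h_subst]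
  field_simp
  push_cast
  ring

theorem stmt_13_general (θ : ℝ) (hθ2 : θ < 2) (p : ℕ) (hp : 1 ≤ p) :
    2 * ((p : ℝ) + 1) * ((p : ℝ) + 2) *
        (∫ u in (0:ℝ)..1, ∫ v in (0:ℝ)..1, (1 - u) ^ (p - 1) * (cuadrasAuge θ u v - u * v))
      = θ * ((p : ℝ) + 2) * (1 - (p : ℝ) * ((p : ℝ) + 1) * betaFn p (4 - θ)) /
          ((p : ℝ) * (2 - θ)) := by
  obtain ⟨n, rfl⟩ := Nat.exists_eq_add_of_le' hp
  have h_inner : ∫ u in (0:ℝ)..1, ∫ v in (0:ℝ)..1, (1 - u) ^ n * (cuadrasAuge θ u v - u * v)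
      = ∫ u in (0:ℝ)..1, θ / (2 * (2 - θ)) * ((1 - u) ^ n * u - (1 - u) ^ n * u ^ (4 - θ - 1)) :=
    integral_congr fun u hu => by
      rw [integral_const_mul,
        integral_cuadrasAuge_sub_mul hθ2 (by rwa [uIcc_of_le zero_le_one] at hu)]
      ring_nf
  have h_rpow_integrable : IntervalIntegrable (fun u : ℝ => (1 - u) ^ n * u ^ (4 - θ - 1))
      MeasureTheory.volume 0 1 :=
    ((continuous_const.sub continuous_id).pow n |>.mul
      (Real.continuous_rpow_const (by linarith))).intervalIntegrable _ _
  rw [Nat.add_sub_cancel, h_inner, integral_const_mul,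
    integral_sub ((by fun_prop : Continuous fun u : ℝ => (1 - u) ^ n * u).intervalIntegrable _ _)
      h_rpow_integrable,
    integral_one_sub_pow_mul_self, ← betaFn_natCast_add_one]
  have h2θ : (2:ℝ) - θ ≠ 0 := by linarith
  push_cast
  field_simp
  ring

theorem stmt_13 (θ : ℝ) (hθ : θ ∈ Set.Icc (0:ℝ) 1) (hθ2 : θ < 2) (p : ℕ) (hp : 1 ≤ p) :
    2 * ((p : ℝ) + 1) * ((p : ℝ) + 2) *
        (∫ u in (0:ℝ)..1, ∫ v in (0:ℝ)..1, (1 - u) ^ (p - 1) * (cuadrasAuge θ u v - u * v))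
      = θ * ((p : ℝ) + 2) * (1 - (p : ℝ) * ((p : ℝ) + 1) * betaFn p (4 - θ)) /
          ((p : ℝ) * (2 - θ)) :=
  stmt_13_general θ hθ2 p hp
end
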